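/- Let ψ ∈ C²([r, r+d]) with r ≥ d > 0 and ψ''(t) ∼ t^{m−2} for some m ≥ 2 (so ψ'' ∼ κ := r^{m−2} on [r,r+d]). Then for x₁, x₃ ∈ ℝ, |∫_r^{r+d} e^{−i(x₁ξ + x₃ψ(ξ))} dξ| ≲ d·(1 + |d(x₁ + ψ'(r)x₃)| + |κd² x₃|)^{−1/2}, and the same bound holds with exponent −1/m in place of −1/2. -/

import Mathlib

/-!
Write the phase as `φ(ξ) = x₁ ξ + x₃ ψ(ξ)`. Replacing `(x₁, x₃)` by `(-x₁, -x₃)` conjugates the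
integral and leaves the bound unchanged, so we may take `x₃ ≥ 0`; then
`φ'' = x₃ ψ'' ∈ [c₀ κ x₃, C₀ κ x₃]`. Put `A = |d φ'(r)|` and `B = κ d² x₃`; one of `1`, `A` and
`(2 C₀ + 1) B` is at least a third of `1 + A + B`.
* If it is `B`, van der Corput's second-derivative test gives
  `|I| ≲ (c₀ κ x₃)^{-1/2} = d (c₀ B)^{-1/2}`.
* If it is `A`, then `φ'` moves by at most `C₀ B / d ≤ A / (2d)` on the interval, so
  `|φ'| ≥ A / (2d)` and the first-derivative test (integration by parts against `1 / φ'`)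
  gives `|I| ≲ d / A`.
* Otherwise `1 + A + B ≤ 3` and the trivial bound `|I| ≤ d` suffices.

The exponent `-1/m` is weaker than `-1/2` because `1 + A + B ≥ 1`.
-/

open Set Complex intervalIntegral

lemma mul_sub_le_sub_of_le_hasDerivWithinAt {g g' : ℝ → ℝ} {a b μ : ℝ}
    (hg : ∀ t ∈ Icc a b, HasDerivWithinAt g (g' t) (Icc a b) t) (hμ : ∀ t ∈ Icc a b, μ ≤ g' t)
    {s t : ℝ} (hs : s ∈ Icc a b) (ht : t ∈ Icc a b) (hst : s ≤ t) :
    μ * (t - s) ≤ g t - g s := by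
  have hlin : ∀ x (s : Set ℝ), HasDerivWithinAt (fun x => μ * x) μ s x := fun x s => by
    simpa using (hasDerivWithinAt_id x s).const_mul μ
  have hmono : MonotoneOn (fun x => g x - μ * x) (Icc a b) :=
    monotoneOn_of_hasDerivWithinAt_nonneg (convex_Icc a b)
      (fun x hx => ((hg x hx).sub (hlin x _)).continuousWithinAt)
      (fun x hx => ((hg x (interior_subset hx)).mono interior_subset).sub (hlin x _))
      (fun x hx => sub_nonneg.2 (hμ x (interior_subset hx)))
  linarith [hmono hs ht hst]

lemma exists_mul_abs_sub_le_abs {g : ℝ → ℝ} {a b μ : ℝ} (hab : a ≤ b)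
    (hg : ContinuousOn g (Icc a b))
    (hgrow : ∀ s ∈ Icc a b, ∀ t ∈ Icc a b, s ≤ t → μ * (t - s) ≤ g t - g s) :
    ∃ c ∈ Icc a b, ∀ t ∈ Icc a b, μ * |t - c| ≤ |g t| := by
  have ha : a ∈ Icc a b := left_mem_Icc.2 hab
  have hb : b ∈ Icc a b := right_mem_Icc.2 hab
  by_cases hga : 0 ≤ g a
  · refine ⟨a, ha, fun t ht => ?_⟩
    rw [abs_of_nonneg (sub_nonneg.2 ht.1)]
    linarith [hgrow a ha t ht ht.1, le_abs_self (g t)]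
  by_cases hgb : g b ≤ 0
  · refine ⟨b, hb, fun t ht => ?_⟩
    rw [abs_sub_comm, abs_of_nonneg (sub_nonneg.2 ht.2)]
    linarith [hgrow t ht b hb ht.2, neg_abs_le (g t)]
  obtain ⟨c, hc, hgc⟩ := intermediate_value_Icc hab hg ⟨(not_le.1 hga).le, (not_le.1 hgb).le⟩
  refine ⟨c, hc, fun t ht => ?_⟩
  rcases le_total c t with hct | htc
  · rw [abs_of_nonneg (sub_nonneg.2 hct)]
    linarith [hgrow c hc t ht hct, le_abs_self (g t)]
  · rw [abs_sub_comm, abs_of_nonneg (sub_nonneg.2 htc)]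
    linarith [hgrow t ht c hc htc, neg_abs_le (g t)]

lemma norm_intervalIntegral_le_add_add {E : Type*} [NormedAddCommGroup E] [NormedSpace ℝ E]
    {F : ℝ → E} {a u v b : ℝ} (hau : a ≤ u) (huv : u ≤ v) (hvb : v ≤ b)
    (hF : ContinuousOn F (Icc a b)) :
    ‖∫ x in a..b, F x‖ ≤ ‖∫ x in a..u, F x‖ + ‖∫ x in u..v, F x‖ + ‖∫ x in v..b, F x‖ := by
  have hint : ∀ s ∈ Icc a b, ∀ t ∈ Icc a b, IntervalIntegrable F MeasureTheory.volume s t :=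
    fun s hs t ht => (hF.mono (uIcc_subset_Icc hs ht)).intervalIntegrable
  have ha : a ∈ Icc a b := ⟨le_rfl, hau.trans (huv.trans hvb)⟩
  have hb : b ∈ Icc a b := ⟨hau.trans (huv.trans hvb), le_rfl⟩
  have hu : u ∈ Icc a b := ⟨hau, huv.trans hvb⟩
  have hv : v ∈ Icc a b := ⟨hau.trans huv, hvb⟩
  rw [← integral_add_adjacent_intervals (hint a ha u hu) (hint u hu b hb),
    ← integral_add_adjacent_intervals (hint u hu v hv) (hint v hv b hb), ← add_assoc]
  exact (norm_add_le _ _).trans (add_le_add_left (norm_add_le _ _) _)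

lemma norm_integral_exp_neg_I_mul (f : ℝ → ℝ) (a b : ℝ) :
    ‖∫ t in a..b, exp (-I * f t)‖ = ‖∫ t in a..b, exp (f t * I)‖ := by
  have hconj : ∀ t, exp (-I * f t) = (starRingEnd ℂ) (exp (f t * I)) := fun t => by
    rw [← exp_conj, map_mul, conj_ofReal, conj_I]; ring_nf
  simp_rw [hconj, intervalIntegral_conj, RCLike.norm_conj]

lemma integral_div_sq_eq_inv_sub_inv {g g' : ℝ → ℝ} {a b : ℝ} (hab : a ≤ b)
    (hg : ∀ t ∈ Icc a b, HasDerivWithinAt g (g' t) (Icc a b) t)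
    (hg'c : ContinuousOn g' (Icc a b)) (hne : ∀ t ∈ Icc a b, g t ≠ 0) :
    ∫ t in a..b, g' t / g t ^ 2 = (g a)⁻¹ - (g b)⁻¹ := by
  have hinv : ∀ t ∈ Icc a b, HasDerivWithinAt (fun t => -(g t)⁻¹) (g' t / g t ^ 2) (Icc a b) t :=
    fun t ht => ((hg t ht).inv (hne t ht)).neg.congr_deriv (by ring)
  have hgc : ContinuousOn g (Icc a b) := fun t ht => (hg t ht).continuousWithinAt
  rw [integral_eq_sub_of_hasDerivAt_of_le hab (fun t ht => (hinv t ht).continuousWithinAt)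
    (fun t ht => (hinv t (Ioo_subset_Icc_self ht)).hasDerivAt (Icc_mem_nhds ht.1 ht.2))
    ((hg'c.div (hgc.pow 2) fun t ht => pow_ne_zero 2 (hne t ht)).mono
      (uIcc_of_le hab).subset).intervalIntegrable]
  ring

lemma integral_exp_mul_I_eq_by_parts {f f' f'' : ℝ → ℝ} {a b : ℝ} (hab : a ≤ b)
    (hf : ∀ t ∈ Icc a b, HasDerivWithinAt f (f' t) (Icc a b) t)
    (hf' : ∀ t ∈ Icc a b, HasDerivWithinAt f' (f'' t) (Icc a b) t)
    (hf''c : ContinuousOn f'' (Icc a b)) (hne : ∀ t ∈ Icc a b, f' t ≠ 0) :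
    ∫ t in a..b, exp (f t * I) =
      (f' b)⁻¹ • (-I * exp (f b * I)) - (f' a)⁻¹ • (-I * exp (f a * I)) +
        ∫ t in a..b, (f'' t / f' t ^ 2) • (-I * exp (f t * I)) := by
  have hf'c : ContinuousOn f' (Icc a b) := fun t ht => (hf' t ht).continuousWithinAt
  have hu : ∀ t ∈ uIcc a b,
      HasDerivWithinAt (fun t => (f' t)⁻¹) (-(f'' t / f' t ^ 2)) (uIcc a b) t := by
    rw [uIcc_of_le hab]
    exact fun t ht => ((hf' t ht).inv (hne t ht)).congr_deriv (neg_div _ _)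
  have hv : ∀ t ∈ uIcc a b, HasDerivWithinAt (fun t => -I * exp (f t * I))
      (f' t • exp (f t * I)) (uIcc a b) t := by
    rw [uIcc_of_le hab]
    intro t ht
    refine (((hf t ht).ofReal_comp.mul_const I).cexp.const_mul (-I)).congr_deriv ?_
    rw [Complex.real_smul]; ring_nf; rw [I_sq]; ring
  have hu'c : ContinuousOn (fun t => -(f'' t / f' t ^ 2)) (Icc a b) :=
    (hf''c.div (hf'c.pow 2) fun t ht => pow_ne_zero 2 (hne t ht)).neg
  have hv'c : ContinuousOn (fun t => f' t • exp (f t * I)) (Icc a b) :=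
    hf'c.smul (fun t ht => ((hf t ht).ofReal_comp.mul_const I).cexp.continuousWithinAt)
  have hibp := integral_smul_deriv_eq_deriv_smul_of_hasDerivWithinAt hu hv
    (hu'c.mono (uIcc_of_le hab).subset).intervalIntegrable
    (hv'c.mono (uIcc_of_le hab).subset).intervalIntegrable
  rw [integral_congr (g := fun t => (f' t)⁻¹ • f' t • exp (f t * I)) fun t ht => by
    rw [uIcc_of_le hab] at ht; exact (inv_smul_smul₀ (hne t ht) _).symm, hibp]
  simp only [neg_smul, integral_neg, sub_neg_eq_add]

theorem norm_integral_exp_le_of_le_abs_deriv {f f' f'' : ℝ → ℝ} {a b δ : ℝ} (hab : a ≤ b)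
    (hδ : 0 < δ) (hf : ∀ t ∈ Icc a b, HasDerivWithinAt f (f' t) (Icc a b) t)
    (hf' : ∀ t ∈ Icc a b, HasDerivWithinAt f' (f'' t) (Icc a b) t)
    (hf''c : ContinuousOn f'' (Icc a b)) (hf''0 : ∀ t ∈ Icc a b, 0 ≤ f'' t)
    (hδf' : ∀ t ∈ Ioo a b, δ ≤ |f' t|) :
    ‖∫ t in a..b, exp (f t * I)‖ ≤ 4 / δ := by
  rcases hab.eq_or_lt with rfl | hab'
  · simp only [integral_same, norm_zero]; positivity
  have hf'c : ContinuousOn f' (Icc a b) := fun t ht => (hf' t ht).continuousWithinAt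
  have hδf'_Icc : ∀ t ∈ Icc a b, δ ≤ |f' t| := fun t ht =>
    ContinuousWithinAt.closure_le (g := fun x => |f' x|) (by rwa [closure_Ioo hab'.ne])
      continuousWithinAt_const ((hf'c t ht).abs.mono Ioo_subset_Icc_self) hδf'
  have hne : ∀ t ∈ Icc a b, f' t ≠ 0 := fun t ht h0 => by
    have := hδf'_Icc t ht; rw [h0, abs_zero] at this; linarith
  have hboundary : ∀ t ∈ Icc a b, ‖(f' t)⁻¹ • (-I * exp (f t * I))‖ ≤ δ⁻¹ := fun t ht => by
    simpa [norm_smul] using inv_anti₀ hδ (hδf'_Icc t ht)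
  have hrem : ‖∫ t in a..b, (f'' t / f' t ^ 2) • (-I * exp (f t * I))‖ ≤ δ⁻¹ + δ⁻¹ := by
    calc ‖∫ t in a..b, (f'' t / f' t ^ 2) • (-I * exp (f t * I))‖
        ≤ ∫ t in a..b, f'' t / f' t ^ 2 :=
          norm_integral_le_of_norm_le hab (MeasureTheory.ae_of_all _ fun t ht => by
            simp [abs_of_nonneg (hf''0 t (Ioc_subset_Icc_self ht))])
            ((hf''c.div (hf'c.pow 2) fun t ht => pow_ne_zero 2 (hne t ht)).mono
              (uIcc_of_le hab).subset).intervalIntegrable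
      _ = (f' a)⁻¹ - (f' b)⁻¹ := integral_div_sq_eq_inv_sub_inv hab hf' hf''c hne
      _ ≤ δ⁻¹ + δ⁻¹ := by
        have ha := hδf'_Icc a (left_mem_Icc.2 hab)
        have hb := hδf'_Icc b (right_mem_Icc.2 hab)
        linarith [le_abs_self (f' a)⁻¹, neg_abs_le (f' b)⁻¹, abs_inv (f' a), abs_inv (f' b),
          inv_anti₀ hδ ha, inv_anti₀ hδ hb]
  rw [integral_exp_mul_I_eq_by_parts hab hf hf' hf''c hne]
  calc _ ≤ δ⁻¹ + δ⁻¹ + (δ⁻¹ + δ⁻¹) := (norm_add_le _ _).trans (add_le_add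
          ((norm_sub_le _ _).trans (add_le_add (hboundary b (right_mem_Icc.2 hab))
            (hboundary a (left_mem_Icc.2 hab)))) hrem)
    _ = 4 / δ := by ring

theorem norm_integral_exp_le_of_le_second_deriv {f f' f'' : ℝ → ℝ} {a b μ : ℝ} (hab : a ≤ b)
    (hμ : 0 < μ) (hf : ∀ t ∈ Icc a b, HasDerivWithinAt f (f' t) (Icc a b) t)
    (hf' : ∀ t ∈ Icc a b, HasDerivWithinAt f' (f'' t) (Icc a b) t)
    (hf''c : ContinuousOn f'' (Icc a b)) (hμf'' : ∀ t ∈ Icc a b, μ ≤ f'' t) :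
    ‖∫ t in a..b, exp (f t * I)‖ ≤ 10 / √μ := by
  set δ := √μ
  have hδ : 0 < δ := Real.sqrt_pos.2 hμ
  have hδ' : 0 < δ⁻¹ := inv_pos.2 hδ
  have hμδ : μ * δ⁻¹ = δ := by
    rw [← Real.mul_self_sqrt hμ.le, mul_inv_cancel_right₀ hδ.ne']
  -- `|f'| ≥ μ |t - c|`, so `|f'| ≥ √μ` off the interval `[c - 1/√μ, c + 1/√μ]`
  obtain ⟨c, hc, hcf'⟩ := exists_mul_abs_sub_le_abs hab
    (fun t ht => (hf' t ht).continuousWithinAt)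
    (fun s hs t ht hst => mul_sub_le_sub_of_le_hasDerivWithinAt hf' hμf'' hs ht hst)
  have houter : ∀ s t, a ≤ s → s ≤ t → t ≤ b → (∀ x ∈ Ioo s t, δ⁻¹ ≤ |x - c|) →
      ‖∫ x in s..t, exp (f x * I)‖ ≤ 4 / δ := fun s t has hst htb hfar => by
    have hsub : Icc s t ⊆ Icc a b := Icc_subset_Icc has htb
    refine norm_integral_exp_le_of_le_abs_deriv hst hδ (fun x hx => (hf x (hsub hx)).mono hsub)
      (fun x hx => (hf' x (hsub hx)).mono hsub) (hf''c.mono hsub)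
      (fun x hx => hμ.le.trans (hμf'' x (hsub hx))) fun x hx => ?_
    rw [← hμδ]
    exact (mul_le_mul_of_nonneg_left (hfar x hx) hμ.le).trans
      (hcf' x (hsub (Ioo_subset_Icc_self hx)))
  set u := max a (c - δ⁻¹)
  set v := min b (c + δ⁻¹)
  have hau : a ≤ u := le_max_left _ _
  have hvb : v ≤ b := min_le_left _ _
  have huv : u ≤ v :=
    max_le (le_min hab (by linarith [hc.1])) (le_min (by linarith [hc.2]) (by linarith))
  have hleft : ‖∫ x in a..u, exp (f x * I)‖ ≤ 4 / δ :=
    houter a u le_rfl hau (huv.trans hvb) fun x hx => by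
      have := (lt_max_iff.1 hx.2).resolve_left hx.1.not_gt
      rw [abs_sub_comm, abs_of_pos (by linarith)]; linarith
  have hright : ‖∫ x in v..b, exp (f x * I)‖ ≤ 4 / δ :=
    houter v b (hau.trans huv) hvb le_rfl fun x hx => by
      have := (min_lt_iff.1 hx.1).resolve_left hx.2.not_gt
      rw [abs_of_pos (by linarith)]; linarith
  have hmid : ‖∫ x in u..v, exp (f x * I)‖ ≤ 2 / δ := by
    refine (norm_integral_le_of_norm_le_const fun x _ => (norm_exp_ofReal_mul_I _).le).trans ?_
    rw [one_mul, abs_of_nonneg (sub_nonneg.2 huv), div_eq_mul_inv]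
    linarith [min_le_right b (c + δ⁻¹), le_max_right a (c - δ⁻¹)]
  calc _ ≤ _ := norm_intervalIntegral_le_add_add hau huv hvb fun x hx =>
        ((hf x hx).ofReal_comp.mul_const I).cexp.continuousWithinAt
    _ ≤ 4 / δ + 2 / δ + 4 / δ := add_le_add (add_le_add hleft hmid) hright
    _ = 10 / δ := by ring

lemma le_mul_rpow_neg_half_of_cases {I d A B K c : ℝ} (hd : 0 < d) (hA : 0 ≤ A) (hB : 0 ≤ B)
    (hK : 1 ≤ K) (hc : 0 < c) (htriv : I ≤ d) (hcurv : 0 < B → I ≤ 10 * d / √(c * B))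
    (hgrad : K * B ≤ A → 1 ≤ A → I ≤ 8 * d / A) :
    I ≤ (10 * √(3 * K / c) + 24) * d * (1 + A + B) ^ (-(1:ℝ) / 2) := by
  set S := 1 + A + B
  have hS : 1 ≤ S := by linarith
  have hBK : B ≤ K * B := le_mul_of_one_le_left hB hK
  rw [neg_div, Real.rpow_neg (by linarith), ← Real.sqrt_eq_rpow, ← div_eq_mul_inv,
    le_div_iff₀ (by positivity)]
  have h24 : 24 * d ≤ (10 * √(3 * K / c) + 24) * d := by
    nlinarith [Real.sqrt_nonneg (3 * K / c)]
  by_cases hsmall : A ≤ 1 ∧ K * B ≤ 1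
  · have hS4 : √S ≤ 2 := Real.sqrt_le_iff.2 ⟨by norm_num, by linarith⟩
    nlinarith [mul_le_mul_of_nonneg_right htriv (Real.sqrt_nonneg S)]
  rcases le_total (K * B) A with hBA | hAB
  · have hA1 : 1 ≤ A := by by_contra h; exact hsmall ⟨by linarith, by linarith⟩
    have hSS : √S ≤ S := Real.sqrt_le_iff.2 ⟨by linarith, by nlinarith⟩
    calc I * √S ≤ 8 * d / A * S :=
          mul_le_mul (hgrad hBA hA1) hSS (Real.sqrt_nonneg S) (by positivity)
      _ ≤ 8 * d / A * (3 * A) := by gcongr; linarith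
      _ = 24 * d := by field_simp; ring
      _ ≤ _ := h24
  · have hKB1 : 1 < K * B := by by_contra h; exact hsmall ⟨by linarith, by linarith⟩
    have hBpos : 0 < B := by nlinarith
    have hcB : 0 < √(c * B) := Real.sqrt_pos.2 (by positivity)
    have hSKB : √S ≤ √(3 * K / c) * √(c * B) := by
      rw [← Real.sqrt_mul (by positivity)]
      exact Real.sqrt_le_sqrt (by field_simp; linarith)
    calc I * √S ≤ 10 * d / √(c * B) * (√(3 * K / c) * √(c * B)) :=
          mul_le_mul (hcurv hBpos) hSKB (Real.sqrt_nonneg S) (by positivity)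
      _ = 10 * √(3 * K / c) * d := by field_simp
      _ ≤ _ := by nlinarith

lemma hasDerivWithinAt_iteratedDerivWithin_two {ψ : ℝ → ℝ} {a b t : ℝ} (hab : a < b)
    (hψ : ContDiffOn ℝ 2 ψ (Icc a b)) (ht : t ∈ Icc a b) :
    HasDerivWithinAt (derivWithin ψ (Icc a b)) (iteratedDerivWithin 2 ψ (Icc a b) t)
      (Icc a b) t := by
  rw [iteratedDerivWithin_eq_iterate]
  exact ((hψ.derivWithin (m := 1) (uniqueDiffOn_Icc hab) (by norm_num)).differentiableOn
    one_ne_zero t ht).hasDerivWithinAt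

section Phase

variable {ψ ψ' ψ'' : ℝ → ℝ} {r d κ c₀ C₀ x₁ x₃ : ℝ}

lemma hasDerivWithinAt_phase
    (hψ : ∀ t ∈ Icc r (r + d), HasDerivWithinAt ψ (ψ' t) (Icc r (r + d)) t) :
    ∀ t ∈ Icc r (r + d),
      HasDerivWithinAt (fun ξ => x₁ * ξ + x₃ * ψ ξ) (x₁ + x₃ * ψ' t) (Icc r (r + d)) t :=
  fun t ht => (((hasDerivWithinAt_id t _).const_mul x₁).fun_add
    ((hψ t ht).const_mul x₃)).congr_deriv (by ring)

lemma norm_integral_exp_phase_le_of_dominant_frequency (hd : 0 < d) (hκ : 0 < κ) (hc₀ : 0 < c₀)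
    (hC₀ : 0 < C₀) (hx₃ : 0 ≤ x₃)
    (hψ : ∀ t ∈ Icc r (r + d), HasDerivWithinAt ψ (ψ' t) (Icc r (r + d)) t)
    (hψ' : ∀ t ∈ Icc r (r + d), HasDerivWithinAt ψ' (ψ'' t) (Icc r (r + d)) t)
    (hψ''c : ContinuousOn ψ'' (Icc r (r + d)))
    (hψ'' : ∀ t ∈ Icc r (r + d), c₀ * κ ≤ ψ'' t ∧ ψ'' t ≤ C₀ * κ)
    (hL : 0 < |x₁ + ψ' r * x₃|) (hdrift : 2 * (x₃ * (C₀ * κ * d)) ≤ |x₁ + ψ' r * x₃|) :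
    ‖∫ ξ in r..r + d, exp (↑(x₁ * ξ + x₃ * ψ ξ) * I)‖ ≤ 8 / |x₁ + ψ' r * x₃| := by
  have hψ'drift : ∀ t ∈ Icc r (r + d), |ψ' t - ψ' r| ≤ C₀ * κ * d := fun t ht => by
    have := norm_image_sub_le_of_norm_deriv_le_segment' (C := C₀ * κ) hψ' (fun x hx => by
      have := hψ'' x (Ico_subset_Icc_self hx)
      rw [Real.norm_eq_abs, abs_le]; constructor <;> nlinarith) t ht
    rw [Real.norm_eq_abs] at this
    exact this.trans (mul_le_mul_of_nonneg_left (by linarith [ht.2]) (by positivity))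
  have hlow : ∀ t ∈ Ioo r (r + d), |x₁ + ψ' r * x₃| / 2 ≤ |x₁ + x₃ * ψ' t| := fun t ht => by
    have hx₃drift : |x₃ * (ψ' t - ψ' r)| ≤ x₃ * (C₀ * κ * d) := by
      rw [abs_mul, abs_of_nonneg hx₃]
      exact mul_le_mul_of_nonneg_left (hψ'drift t (Ioo_subset_Icc_self ht)) hx₃
    rw [show x₁ + x₃ * ψ' t = (x₁ + ψ' r * x₃) + x₃ * (ψ' t - ψ' r) by ring]
    linarith [abs_sub_abs_le_abs_add (x₁ + ψ' r * x₃) (x₃ * (ψ' t - ψ' r))]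
  calc _ ≤ 4 / (|x₁ + ψ' r * x₃| / 2) :=
        norm_integral_exp_le_of_le_abs_deriv (by linarith) (half_pos hL) (hasDerivWithinAt_phase hψ)
          (fun t ht => ((hψ' t ht).const_mul x₃).const_add x₁) (continuousOn_const.mul hψ''c)
          (fun t ht => mul_nonneg hx₃ (by nlinarith [(hψ'' t ht).1])) hlow
    _ = 8 / |x₁ + ψ' r * x₃| := by field_simp; ring

theorem norm_integral_exp_phase_le (hd : 0 < d) (hκ : 0 < κ) (hc₀ : 0 < c₀) (hC₀ : 0 < C₀)
    (hx₃ : 0 ≤ x₃) (hψ : ∀ t ∈ Icc r (r + d), HasDerivWithinAt ψ (ψ' t) (Icc r (r + d)) t)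
    (hψ' : ∀ t ∈ Icc r (r + d), HasDerivWithinAt ψ' (ψ'' t) (Icc r (r + d)) t)
    (hψ''c : ContinuousOn ψ'' (Icc r (r + d)))
    (hψ'' : ∀ t ∈ Icc r (r + d), c₀ * κ ≤ ψ'' t ∧ ψ'' t ≤ C₀ * κ) :
    ‖∫ ξ in r..r + d, exp (↑(x₁ * ξ + x₃ * ψ ξ) * I)‖ ≤
      (10 * √(3 * (2 * C₀ + 1) / c₀) + 24) * d *
        (1 + |d * (x₁ + ψ' r * x₃)| + |κ * d ^ 2 * x₃|) ^ (-(1:ℝ) / 2) := by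
  have hB : |κ * d ^ 2 * x₃| = d * (κ * d * x₃) := by
    rw [abs_of_nonneg (by positivity)]; ring
  have hA : |d * (x₁ + ψ' r * x₃)| = d * |x₁ + ψ' r * x₃| := by rw [abs_mul, abs_of_pos hd]
  refine le_mul_rpow_neg_half_of_cases hd (abs_nonneg _) (abs_nonneg _) (by linarith) hc₀ ?_ ?_ ?_
  · refine (norm_integral_le_of_norm_le_const fun x _ => (norm_exp_ofReal_mul_I _).le).trans ?_
    simp [abs_of_pos hd]
  · intro hBpos
    have hx₃' : 0 < x₃ := lt_of_le_of_ne hx₃ (by rintro rfl; simp at hBpos)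
    have hsq : √(c₀ * |κ * d ^ 2 * x₃|) = d * √(c₀ * κ * x₃) := by
      rw [abs_of_pos (by positivity), show c₀ * (κ * d ^ 2 * x₃) = d ^ 2 * (c₀ * κ * x₃) by ring,
        Real.sqrt_mul (sq_nonneg d), Real.sqrt_sq hd.le]
    rw [hsq, mul_comm d, mul_div_mul_right _ _ hd.ne']
    exact norm_integral_exp_le_of_le_second_deriv (by linarith) (by positivity)
      (hasDerivWithinAt_phase hψ) (fun t ht => ((hψ' t ht).const_mul x₃).const_add x₁)
      (continuousOn_const.mul hψ''c) fun t ht => by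
        linarith [mul_le_mul_of_nonneg_left (hψ'' t ht).1 hx₃]
  · intro hBA hA1
    rw [hA, hB] at hBA
    rw [hA] at hA1 ⊢
    rw [mul_comm d, mul_div_mul_right _ _ hd.ne']
    refine norm_integral_exp_phase_le_of_dominant_frequency hd hκ hc₀ hC₀ hx₃ hψ hψ' hψ''c hψ''
      (pos_of_mul_pos_right (by linarith) hd.le) (le_of_mul_le_mul_left ?_ hd)
    nlinarith [mul_nonneg (mul_nonneg hκ.le hd.le) hx₃]

theorem norm_integral_exp_neg_I_phase_le (hd : 0 < d) (hκ : 0 < κ) (hc₀ : 0 < c₀)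
    (hC₀ : 0 < C₀) (hψ : ∀ t ∈ Icc r (r + d), HasDerivWithinAt ψ (ψ' t) (Icc r (r + d)) t)
    (hψ' : ∀ t ∈ Icc r (r + d), HasDerivWithinAt ψ' (ψ'' t) (Icc r (r + d)) t)
    (hψ''c : ContinuousOn ψ'' (Icc r (r + d)))
    (hψ'' : ∀ t ∈ Icc r (r + d), c₀ * κ ≤ ψ'' t ∧ ψ'' t ≤ C₀ * κ) :
    ‖∫ ξ in r..r + d, exp (-I * ↑(x₁ * ξ + x₃ * ψ ξ))‖ ≤
      (10 * √(3 * (2 * C₀ + 1) / c₀) + 24) * d *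
        (1 + |d * (x₁ + ψ' r * x₃)| + |κ * d ^ 2 * x₃|) ^ (-(1:ℝ) / 2) := by
  rcases le_total 0 x₃ with hx₃ | hx₃
  · rw [norm_integral_exp_neg_I_mul (fun ξ => x₁ * ξ + x₃ * ψ ξ)]
    exact norm_integral_exp_phase_le hd hκ hc₀ hC₀ hx₃ hψ hψ' hψ''c hψ''
  · have h := norm_integral_exp_phase_le (x₁ := -x₁) hd hκ hc₀ hC₀ (neg_nonneg.2 hx₃) hψ hψ'
      hψ''c hψ''
    rw [← abs_neg, ← abs_neg (κ * d ^ 2 * -x₃)] at h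
    convert h using 5
    · push_cast; ring
    · congr 1; ring
    · ring

end Phase

/-- Van der Corput-type bound: if `ψ ∈ C²([r, r+d])` with `r ≥ d > 0` and
`ψ'' ∼ κ := r^{m-2}` on `[r, r+d]` (`m ≥ 2`), then
`|∫_r^{r+d} e^{-i(x₁ξ + x₃ψ(ξ))} dξ| ≲ d (1 + |d(x₁+ψ'(r)x₃)| + |κ d² x₃|)^{-1/2}`,
and the same bound holds with exponent `-1/m` instead of `-1/2`. -/
theorem stmt_15 (m c₀ C₀ : ℝ) (hm : 2 ≤ m) (hc₀ : 0 < c₀) (hC₀ : 0 < C₀) :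
    ∃ Cb : ℝ, 0 < Cb ∧
      ∀ (ψ : ℝ → ℝ) (r d κ x₁ x₃ : ℝ),
        0 < d → d ≤ r → κ = r ^ (m - 2) →
        ContDiffOn ℝ 2 ψ (Set.Icc r (r + d)) →
        (∀ t ∈ Set.Icc r (r + d),
          c₀ * κ ≤ iteratedDerivWithin 2 ψ (Set.Icc r (r + d)) t ∧
            iteratedDerivWithin 2 ψ (Set.Icc r (r + d)) t ≤ C₀ * κ) →
        ‖∫ ξ in r..(r + d),
            Complex.exp (-Complex.I * ((x₁ * ξ + x₃ * ψ ξ : ℝ) : ℂ))‖ ≤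
          Cb * d * (1 + |d * (x₁ + derivWithin ψ (Set.Icc r (r + d)) r * x₃)| +
            |κ * d ^ 2 * x₃|) ^ (-(1:ℝ) / 2) ∧
        ‖∫ ξ in r..(r + d),
            Complex.exp (-Complex.I * ((x₁ * ξ + x₃ * ψ ξ : ℝ) : ℂ))‖ ≤
          Cb * d * (1 + |d * (x₁ + derivWithin ψ (Set.Icc r (r + d)) r * x₃)| +
            |κ * d ^ 2 * x₃|) ^ (-(1:ℝ) / m) := by
  refine ⟨10 * √(3 * (2 * C₀ + 1) / c₀) + 24, by positivity,
    fun ψ r d κ x₁ x₃ hd hdr hκ hψ hψ'' => ?_⟩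
  have hrd : r < r + d := by linarith
  have hhalf := norm_integral_exp_neg_I_phase_le (x₁ := x₁) (x₃ := x₃) hd
    (hκ ▸ Real.rpow_pos_of_pos (hd.trans_le hdr) _) hc₀ hC₀
    (fun t ht => (hψ.differentiableOn two_ne_zero t ht).hasDerivWithinAt)
    (fun t ht => hasDerivWithinAt_iteratedDerivWithin_two hrd hψ ht)
    (hψ.continuousOn_iteratedDerivWithin le_rfl (uniqueDiffOn_Icc hrd)) hψ''
  refine ⟨hhalf, hhalf.trans (mul_le_mul_of_nonneg_left
    (Real.rpow_le_rpow_of_exponent_le ?_ ?_) (by positivity))⟩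
  · exact le_add_of_le_of_nonneg (le_add_of_nonneg_right (abs_nonneg _)) (abs_nonneg _)
  · rw [neg_div, neg_div, neg_le_neg_iff]
    exact one_div_le_one_div_of_le two_pos hm
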